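/- For every positive integer k, there exist a connected graph H and a vertex v ∈ V(H) such that dem(H \ v) - dem(H) ≥ k. -/

import Mathlib

open SimpleGraph

variable {V : Type*}

/-- Edge `e` is monitored by vertex `x` in `G`: some distance from `x` changes
when `e` is removed. -/
def monitors (G : SimpleGraph V) (x : V) (e : Sym2 V) : Prop :=
  ∃ y : V, G.edist x y ≠ (G.deleteEdges {e}).edist x y

/-- `M` is a distance-edge-monitoring set of `G`. -/
def IsDEMSet (G : SimpleGraph V) (M : Set V) : Prop :=
  ∀ e ∈ G.edgeSet, ∃ x ∈ M, monitors G x e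

/-- The distance-edge-monitoring number of `G`. -/
noncomputable def dem (G : SimpleGraph V) : ℕ :=
  sInf {n | ∃ M : Set V, M.ncard = n ∧ IsDEMSet G M}


/-!
In the spider `H` (a center `0` joined to `k + 1` paths of length two), the center alone
monitors every edge: deleting an edge cuts off its far endpoint from `0`. Removing the center
leaves `k + 1` copies of `K₂`, and an edge can only be monitored from its own component, so
every DEM set needs a vertex in each copy.
-/

namespace SimpleGraph

variable {G : SimpleGraph V}

theorem Reachable.mem_of_forall_adj {S : Set V} (hS : ∀ a b, G.Adj a b → a ∈ S → b ∈ S)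
    {x y : V} (h : G.Reachable x y) (hx : x ∈ S) : y ∈ S := by
  obtain ⟨p⟩ := h
  induction p with
  | nil => exact hx
  | cons hadj _ ih => exact ih (hS _ _ hadj hx)

theorem edist_deleteEdges_eq_of_not_reachable {x a : V} (b y : V) (hxa : ¬ G.Reachable x a) :
    (G.deleteEdges {s(a, b)}).edist x y = G.edist x y := by
  classical
  refine le_antisymm ?_ (edist_anti (deleteEdges_le _))
  by_cases hxy : G.Reachable x y
  · obtain ⟨p, hp⟩ := hxy.exists_walk_length_eq_edist
    have havoid : ∀ e ∈ p.edges, e ∉ ({s(a, b)} : Set (Sym2 V)) := by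
      rintro e he rfl
      exact hxa ⟨p.takeUntil a (p.fst_mem_support_of_mem_edges he)⟩
    calc (G.deleteEdges {s(a, b)}).edist x y ≤ (p.toDeleteEdges _ havoid).length := edist_le _
      _ = G.edist x y := by rw [Walk.length_transfer, hp]
  · rw [edist_eq_top_of_not_reachable hxy]
    exact le_top

end SimpleGraph

section Monitoring

variable {G : SimpleGraph V}

theorem monitors.reachable {x a b : V} (h : monitors G x s(a, b)) : G.Reachable x a := by
  by_contra hxa
  obtain ⟨y, hy⟩ := h
  exact hy (edist_deleteEdges_eq_of_not_reachable b y hxa).symm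

theorem monitors_of_not_reachable_deleteEdges {x y : V} {e : Sym2 V} (hxy : G.Reachable x y)
    (h : ¬ (G.deleteEdges {e}).Reachable x y) : monitors G x e :=
  ⟨y, by rw [edist_eq_top_of_not_reachable h]; exact edist_ne_top_iff_reachable.mpr hxy⟩

theorem monitors_left_of_adj {a b : V} (h : G.Adj a b) : monitors G a s(a, b) := by
  refine ⟨b, fun hd => ?_⟩
  rw [edist_eq_one_iff_adj.mpr h, eq_comm, edist_eq_one_iff_adj, deleteEdges_adj] at hd
  exact hd.2 rfl

theorem isDEMSet_univ (G : SimpleGraph V) : IsDEMSet G Set.univ := by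
  intro e he
  induction e with
  | _ a b => exact ⟨a, Set.mem_univ a, monitors_left_of_adj he⟩

theorem dem_le_ncard {M : Set V} (hM : IsDEMSet G M) : dem G ≤ M.ncard :=
  Nat.sInf_le ⟨M, rfl, hM⟩

/-- An edge can only be monitored from its own component (`monitors.reachable`). -/
theorem card_le_dem [Finite V] {ι : Type*} (a b : ι → V) (hab : ∀ i, G.Adj (a i) (b i))
    (hsep : Pairwise fun i j => ¬ G.Reachable (a i) (a j)) : Nat.card ι ≤ dem G := by
  obtain ⟨M, hcard, hM⟩ : dem G ∈ {n | ∃ M : Set V, M.ncard = n ∧ IsDEMSet G M} :=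
    Nat.sInf_mem ⟨_, Set.univ, rfl, isDEMSet_univ G⟩
  choose x hxM hx using fun i => hM _ (G.mem_edgeSet.mpr (hab i))
  have hinj : Function.Injective fun i => (⟨x i, hxM i⟩ : M) := by
    intro i j hij
    by_contra hne
    have hxij : x i = x j := congrArg Subtype.val hij
    exact hsep hne ((hx i).reachable.symm.trans (hxij ▸ (hx j).reachable))
  rw [← hcard, ← Nat.card_coe_set_eq]
  exact Nat.card_le_card_of_injective _ hinj

end Monitoring

/-- Center `0`; the `i`-th leg is the path `0 - (2 * i + 1) - (2 * i + 2)`. -/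
def spiderRel (k : ℕ) (a b : Fin (2 * k + 3)) : Prop :=
  (a.val = 0 ∧ b.val % 2 = 1) ∨ (a.val % 2 = 1 ∧ b.val = a.val + 1)

def spider (k : ℕ) : SimpleGraph (Fin (2 * k + 3)) := fromRel (spiderRel k)

theorem spider_adj {k : ℕ} {a b : Fin (2 * k + 3)} :
    (spider k).Adj a b ↔ a.val ≠ b.val ∧ (spiderRel k a b ∨ spiderRel k b a) := by
  rw [spider, fromRel_adj, Fin.val_ne_iff]

theorem spider_connected (k : ℕ) : (spider k).Connected := by
  have hodd (w : Fin (2 * k + 3)) (hw : w.val % 2 = 1) : (spider k).Reachable 0 w :=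
    (spider_adj.mpr ⟨by simp; omega, by simp [spiderRel]; omega⟩).reachable
  rw [connected_iff_exists_forall_reachable]
  refine ⟨0, fun w => ?_⟩
  obtain hw | hw | hw : w.val = 0 ∨ w.val % 2 = 1 ∨ (w.val % 2 = 0 ∧ w.val ≠ 0) := by omega
  · rw [show w = 0 from Fin.ext hw]
  · exact hodd w hw
  · let u : Fin (2 * k + 3) := ⟨w.val - 1, by omega⟩
    have huw : (spider k).Adj u w :=
      spider_adj.mpr ⟨by simp [u]; omega, by simp [spiderRel, u]; omega⟩
    exact (hodd u (by simp [u]; omega)).trans huw.reachable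

/-- Once `s(a, b)` is gone, the vertices of `b`'s leg at least as far out as `b` are closed
under adjacency. -/
theorem not_reachable_deleteEdges_spider {k : ℕ} {a b : Fin (2 * k + 3)}
    (hab : spiderRel k a b) :
    ¬ ((spider k).deleteEdges {s(a, b)}).Reachable 0 b := by
  intro h
  let S : Set (Fin (2 * k + 3)) :=
    {w | w.val ≠ 0 ∧ (w.val - 1) / 2 = (b.val - 1) / 2 ∧ b.val ≤ w.val}
  have hS : ∀ p q, ((spider k).deleteEdges {s(a, b)}).Adj p q → p ∈ S → q ∈ S := by
    intro p q hpq hp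
    simp only [deleteEdges_adj, spider_adj, spiderRel, Set.mem_singleton_iff, Sym2.eq_iff,
      ← Fin.val_inj] at hpq
    simp only [spiderRel, S, Set.mem_ofPred_eq] at hab hp ⊢
    omega
  have hb : b ∈ S := ⟨by simp only [spiderRel] at hab; omega, rfl, le_rfl⟩
  exact (h.symm.mem_of_forall_adj hS hb).1 rfl

theorem dem_spider_le_one (k : ℕ) : dem (spider k) ≤ 1 := by
  refine (dem_le_ncard (M := {0}) ?_).trans (Set.ncard_singleton _).le
  intro e he
  induction e with
  | _ a b =>
    refine ⟨0, rfl, ?_⟩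
    rcases (spider_adj.mp he).2 with hab | hba
    · exact monitors_of_not_reachable_deleteEdges (spider_connected k _ _)
        (not_reachable_deleteEdges_spider hab)
    · rw [Sym2.eq_swap]
      exact monitors_of_not_reachable_deleteEdges (spider_connected k _ _)
        (not_reachable_deleteEdges_spider hba)

theorem leg_eq_of_reachable_spider_induce_ne_zero {k : ℕ} {p q : {w : Fin (2 * k + 3) | w ≠ 0}}
    (h : ((spider k).induce {w | w ≠ 0}).Reachable p q) :
    ((p : Fin (2 * k + 3)).val - 1) / 2 = ((q : Fin (2 * k + 3)).val - 1) / 2 := by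
  let S : Set {w : Fin (2 * k + 3) | w ≠ 0} :=
    {w | ((w : Fin (2 * k + 3)).val - 1) / 2 = ((p : Fin (2 * k + 3)).val - 1) / 2}
  have hS : ∀ u v, ((spider k).induce {w | w ≠ 0}).Adj u v → u ∈ S → v ∈ S := by
    intro u v huv hu
    have hu0 := u.2
    have hv0 := v.2
    simp only [comap_adj, Function.Embedding.subtype_apply, spider_adj, spiderRel, S,
      Set.mem_ofPred_eq, ← Fin.val_ne_iff, Fin.val_zero] at huv hu hu0 hv0 ⊢
    omega
  exact (h.mem_of_forall_adj hS rfl).symm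

theorem le_dem_spider_induce_ne_zero (k : ℕ) :
    k + 1 ≤ dem ((spider k).induce {w | w ≠ 0}) := by
  let a (i : Fin (k + 1)) : {w : Fin (2 * k + 3) | w ≠ 0} :=
    ⟨⟨2 * i + 1, by omega⟩, Fin.ne_of_val_ne (by simp)⟩
  let b (i : Fin (k + 1)) : {w : Fin (2 * k + 3) | w ≠ 0} :=
    ⟨⟨2 * i + 2, by omega⟩, Fin.ne_of_val_ne (by simp)⟩
  have hab (i) : ((spider k).induce {w | w ≠ 0}).Adj (a i) (b i) :=
    spider_adj.mpr ⟨by simp [a, b], by simp [spiderRel, a, b]⟩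
  have hsep : Pairwise fun i j => ¬ ((spider k).induce {w | w ≠ 0}).Reachable (a i) (a j) :=
    fun i j hij h => hij (Fin.ext (by simpa [a] using leg_eq_of_reachable_spider_induce_ne_zero h))
  simpa using card_le_dem a b hab hsep

theorem stmt13_general (k : ℕ) :
    ∃ (n : ℕ) (H : SimpleGraph (Fin n)) (v : Fin n), H.Connected ∧
      dem (SimpleGraph.induce {w | w ≠ v} H) - dem H ≥ k := by
  refine ⟨2 * k + 3, spider k, 0, spider_connected k, ?_⟩
  have hH := dem_spider_le_one k
  have hG := le_dem_spider_induce_ne_zero k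
  omega

theorem stmt13 (k : ℕ) (hk : 1 ≤ k) :
    ∃ (n : ℕ) (H : SimpleGraph (Fin n)) (v : Fin n), H.Connected ∧
      dem (SimpleGraph.induce {w | w ≠ v} H) - dem H ≥ k :=
  stmt13_general k
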